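/- First order contraction lemma (Lemma: fo_contraction): Let m ≥ 1, let D ∈ ℝ^{n×ℓ} have smallest singular value s_min(D) > 0 (e.g. D is the incidence matrix of a tree), and let Ω_0 > 0, d̄ > 0. Then for every δ̄ > 0 and every ω_0 with 0 < ω_0 < Ω_0 there exists λ̄_0 > 0 such that the following holds: for every diagonal matrix Λ_0 ∈ ℝ^{ℓ×ℓ} whose diagonal entries are all ≥ λ̄_0, every continuous d : [t_0, ∞) → ℝ^ℓ with ‖d(t)‖ ≤ d̄ for all t ≥ t_0, and every differentiable σ_0 : [t_0, ∞) → ℝ^ℓ satisfying σ̇_0(t) = d(t) − Λ_0 ⌈DᵀD σ_0(t)⌋^{m/(m+1)} for all t ≥ t_0 and ‖D σ_0(t_0)‖ ≤ Ω_0, one has ‖D σ_0(t)‖ ≤ ω_0 for all t ≥ t_0 + δ̄. -/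

import Mathlib

open Matrix Finset

/-- Signed power: `⌈x⌋^α = |x|^α sign(x)`. -/
noncomputable def spow (α x : ℝ) : ℝ := |x| ^ α * Real.sign x

/-- Euclidean norm of a vector in `ℝ^k`. -/
noncomputable def vecNorm {k : ℕ} (x : Fin k → ℝ) : ℝ := Real.sqrt (∑ i, x i ^ 2)

/-- Smallest singular value of a matrix: the infimum of `‖A x‖` over unit vectors `x`. -/
noncomputable def sMin {n l : ℕ} (A : Matrix (Fin n) (Fin l) ℝ) : ℝ :=
  sInf {r : ℝ | ∃ x : Fin l → ℝ, vecNorm x = 1 ∧ r = vecNorm (A.mulVec x)}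


lemma vecNorm_nonneg {k : ℕ} (x : Fin k → ℝ) : 0 ≤ vecNorm x := Real.sqrt_nonneg _

lemma vecNorm_sq {k : ℕ} (x : Fin k → ℝ) : vecNorm x ^ 2 = ∑ i, x i ^ 2 :=
  Real.sq_sqrt (Finset.sum_nonneg fun i _ => sq_nonneg _)

lemma abs_le_vecNorm {k : ℕ} (x : Fin k → ℝ) (i : Fin k) : |x i| ≤ vecNorm x := by
  rw [← Real.sqrt_sq_eq_abs]
  exact Real.sqrt_le_sqrt (Finset.single_le_sum (f := fun j => x j ^ 2)
    (fun j _ => sq_nonneg _) (mem_univ i))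

lemma vecNorm_eq_zero {k : ℕ} {x : Fin k → ℝ} (h : vecNorm x = 0) : ∀ i, x i = 0 := by
  intro i
  have h2 : ∑ j, x j ^ 2 = 0 := by
    have := vecNorm_sq x
    rw [h] at this; linarith [this]
  have := (Finset.sum_eq_zero_iff_of_nonneg (fun j _ => sq_nonneg (x j))).mp h2 i (mem_univ i)
  exact pow_eq_zero_iff (by norm_num) |>.mp this

lemma vecNorm_smul {k : ℕ} (c : ℝ) (x : Fin k → ℝ) :
    vecNorm (fun i => c * x i) = |c| * vecNorm x := by
  unfold vecNorm
  rw [← Real.sqrt_sq_eq_abs, ← Real.sqrt_mul (sq_nonneg c), Finset.mul_sum]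
  congr 1; apply Finset.sum_congr rfl; intro i _; ring

lemma vec_cauchy {k : ℕ} (x y : Fin k → ℝ) : ∑ i, x i * y i ≤ vecNorm x * vecNorm y := by
  have h := sum_mul_sq_le_sq_mul_sq Finset.univ x y
  have hx := vecNorm_nonneg x
  have hy := vecNorm_nonneg y
  have h1 := vecNorm_sq x
  have h2 := vecNorm_sq y
  nlinarith [h, mul_nonneg hx hy]

lemma sum_transpose_mul {n l : ℕ} (D : Matrix (Fin n) (Fin l) ℝ) (z w : Fin l → ℝ) :
    ∑ j, ((Dᵀ * D).mulVec z) j * w j = ∑ i, (D.mulVec z) i * (D.mulVec w) i := by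
  rw [← Matrix.mulVec_mulVec]
  simp only [Matrix.mulVec, dotProduct, Matrix.transpose_apply, Finset.sum_mul,
    Finset.mul_sum]
  rw [Finset.sum_comm]
  apply Finset.sum_congr rfl; intro i _
  apply Finset.sum_congr rfl; intro j _
  apply Finset.sum_congr rfl; intro p _
  ring

lemma smin_mul_le {n l : ℕ} (D : Matrix (Fin n) (Fin l) ℝ) (hs : 0 < sMin D) (z : Fin l → ℝ) :
    sMin D * vecNorm z ≤ vecNorm (D.mulVec z) := by
  rcases eq_or_lt_of_le (vecNorm_nonneg z) with h0 | h0
  · rw [← h0, mul_zero]; exact vecNorm_nonneg _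
  · set c := vecNorm z with hc
    have hx : vecNorm (fun i => c⁻¹ * z i) = 1 := by
      rw [vecNorm_smul, abs_of_pos (inv_pos.mpr h0)]
      field_simp
      exact hc.symm
    have hmem : vecNorm (D.mulVec fun i => c⁻¹ * z i) ∈
        {r : ℝ | ∃ x : Fin l → ℝ, vecNorm x = 1 ∧ r = vecNorm (D.mulVec x)} :=
      ⟨_, hx, rfl⟩
    have hbdd : BddBelow {r : ℝ | ∃ x : Fin l → ℝ, vecNorm x = 1 ∧ r = vecNorm (D.mulVec x)} :=
      ⟨0, fun r ⟨x, _, hr⟩ => hr ▸ vecNorm_nonneg _⟩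
    have hle : sMin D ≤ vecNorm (D.mulVec fun i => c⁻¹ * z i) := csInf_le hbdd hmem
    have heq : D.mulVec (fun i => c⁻¹ * z i) = fun i => c⁻¹ * (D.mulVec z) i := by
      ext i
      simp only [Matrix.mulVec, dotProduct, Finset.mul_sum]
      apply Finset.sum_congr rfl; intro j _; ring
    rw [heq, vecNorm_smul, abs_of_pos (inv_pos.mpr h0)] at hle
    rw [mul_comm]
    calc c * sMin D ≤ c * (c⁻¹ * vecNorm (D.mulVec z)) := by
          exact mul_le_mul_of_nonneg_left hle h0.le
      _ = vecNorm (D.mulVec z) := by field_simp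

lemma smin_DtD {n l : ℕ} (D : Matrix (Fin n) (Fin l) ℝ) (hs : 0 < sMin D) (z : Fin l → ℝ) :
    sMin D * vecNorm (D.mulVec z) ≤ vecNorm ((Dᵀ * D).mulVec z) := by
  have key : ∑ j, ((Dᵀ * D).mulVec z) j * z j = ∑ i, (D.mulVec z) i ^ 2 := by
    rw [sum_transpose_mul]; apply Finset.sum_congr rfl; intro i _; ring
  have hcs : ∑ j, ((Dᵀ * D).mulVec z) j * z j ≤ vecNorm ((Dᵀ * D).mulVec z) * vecNorm z :=
    vec_cauchy _ _
  have hxz : sMin D * vecNorm z ≤ vecNorm (D.mulVec z) := smin_mul_le D hs z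
  rcases eq_or_lt_of_le (vecNorm_nonneg z) with h0 | h0
  · have hz : ∀ i, z i = 0 := vecNorm_eq_zero h0.symm
    have : D.mulVec z = 0 := by
      ext i; simp only [Matrix.mulVec, dotProduct]
      apply Finset.sum_eq_zero; intro j _; rw [hz j, mul_zero]
    rw [this]
    have : vecNorm (0 : Fin n → ℝ) = 0 := by
      unfold vecNorm; simp
    rw [this, mul_zero]
    exact vecNorm_nonneg _
  · have hsq : vecNorm (D.mulVec z) ^ 2 ≤ vecNorm ((Dᵀ * D).mulVec z) * vecNorm z := by
      rw [vecNorm_sq, ← key]; exact hcs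
    nlinarith [vecNorm_nonneg (D.mulVec z), vecNorm_nonneg ((Dᵀ * D).mulVec z), hs,
      mul_le_mul_of_nonneg_left hxz (vecNorm_nonneg (D.mulVec z))]

lemma spow_mul_self {α : ℝ} (hα : 0 ≤ α) (x : ℝ) : x * spow α x = |x| ^ (α + 1) := by
  unfold spow
  rcases lt_trichotomy x 0 with h | h | h
  · rw [Real.sign_of_neg h, abs_of_neg h, Real.rpow_add_one (by linarith : -x ≠ 0)]
    ring
  · subst h; simp [Real.zero_rpow (by linarith : α + 1 ≠ 0)]
  · rw [Real.sign_of_pos h, abs_of_pos h, Real.rpow_add_one (ne_of_gt h)]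
    ring

lemma vecNorm_rpow_le_sum {k : ℕ} {β : ℝ} (hβ0 : 0 < β) (hβ2 : β ≤ 2) (y : Fin k → ℝ) :
    vecNorm y ^ β ≤ ∑ j, |y j| ^ β := by
  set N := vecNorm y with hN
  rcases eq_or_lt_of_le (vecNorm_nonneg y) with h0 | h0
  · rw [hN, ← h0, Real.zero_rpow (ne_of_gt hβ0)]
    exact Finset.sum_nonneg fun j _ => Real.rpow_nonneg (abs_nonneg _) _
  · have hterm : ∀ j, y j ^ 2 ≤ |y j| ^ β * N ^ (2 - β) := by
      intro j
      rcases eq_or_ne (y j) 0 with hj | hj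
      · simp [hj, Real.zero_rpow (ne_of_gt hβ0)]
      · have habs : (0 : ℝ) < |y j| := abs_pos.mpr hj
        have h1 : y j ^ 2 = |y j| ^ (β : ℝ) * |y j| ^ (2 - β) := by
          rw [← Real.rpow_add habs]
          norm_num
        rw [h1]
        apply mul_le_mul_of_nonneg_left _ (Real.rpow_nonneg (abs_nonneg _) _)
        exact Real.rpow_le_rpow (abs_nonneg _) (abs_le_vecNorm y j) (by linarith)
    have hsum : N ^ (2 : ℝ) ≤ (∑ j, |y j| ^ β) * N ^ (2 - β) := by
      have : N ^ (2 : ℝ) = ∑ j, y j ^ 2 := by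
        rw [show ((2 : ℝ)) = ((2 : ℕ) : ℝ) by norm_num, Real.rpow_natCast]
        exact vecNorm_sq y
      rw [this, Finset.sum_mul]
      exact Finset.sum_le_sum fun j _ => hterm j
    have hsplit : N ^ (2 : ℝ) = N ^ β * N ^ (2 - β) := by
      rw [← Real.rpow_add h0]; norm_num [hN]
    have hpos : (0 : ℝ) < N ^ (2 - β) := Real.rpow_pos_of_pos h0 _
    rw [hsplit] at hsum
    exact le_of_mul_le_mul_right hsum hpos

lemma descent {f F : ℝ → ℝ} {a c K : ℝ} (hK : 0 ≤ K)
    (hf : ∀ t ≥ a, HasDerivAt f (F t) t)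
    (hd : ∀ t ≥ a, c ≤ f t → F t ≤ -K) :
    ∀ t ≥ a, f t ≤ max c (f a - K * (t - a)) := by
  intro t ht
  have hcont : ∀ p, a ≤ p → ContinuousOn f (Set.Icc p t) := fun p hp v hv =>
    ((hf v (le_trans hp hv.1)).continuousAt).continuousWithinAt
  by_cases hex : ∃ u, u ∈ Set.Icc a t ∧ f u ≤ c
  · obtain ⟨u, hu, hfu⟩ := hex
    refine le_trans ?_ (le_max_left _ _)
    set S := Set.Icc u t ∩ f ⁻¹' Set.Iic c with hS
    have hSne : S.Nonempty := ⟨u, ⟨le_refl u, hu.2⟩, hfu⟩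
    have hSbdd : BddAbove S := ⟨t, fun v hv => hv.1.2⟩
    have hSclosed : IsClosed S :=
      (hcont u hu.1).preimage_isClosed_of_isClosed isClosed_Icc isClosed_Iic
    set u' := sSup S with hu'
    have hu'S : u' ∈ S := hSclosed.csSup_mem hSne hSbdd
    have hu'a : a ≤ u' := le_trans hu.1 hu'S.1.1
    have hfu' : f u' ≤ c := hu'S.2
    rcases eq_or_lt_of_le hu'S.1.2 with heq | hlt
    · rwa [← heq]
    · have hanti : AntitoneOn f (Set.Icc u' t) := by
        apply antitoneOn_of_deriv_nonpos (convex_Icc _ _) (hcont u' hu'a)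
        · intro v hv
          rw [interior_Icc] at hv
          exact ((hf v (le_trans hu'a hv.1.le)).differentiableAt).differentiableWithinAt
        · intro v hv
          rw [interior_Icc] at hv
          have hva : a ≤ v := le_trans hu'a hv.1.le
          rw [(hf v hva).deriv]
          have hcv : c ≤ f v := by
            by_contra hc
            push_neg at hc
            have hvS : v ∈ S := ⟨⟨le_trans hu'S.1.1 hv.1.le, hv.2.le⟩, hc.le⟩
            exact absurd (le_csSup hSbdd hvS) (not_le.mpr hv.1)
          linarith [hd v hva hcv]
      calc f t ≤ f u' := hanti ⟨le_refl u', hlt.le⟩ ⟨hlt.le, le_refl t⟩ hlt.le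
        _ ≤ c := hfu'
  · push_neg at hex
    refine le_trans ?_ (le_max_right _ _)
    have hanti : AntitoneOn (fun v => f v + K * v) (Set.Icc a t) := by
      apply antitoneOn_of_deriv_nonpos (convex_Icc _ _)
      · exact fun v hv => ((hf v hv.1).continuousAt.add
          (continuous_const.mul continuous_id).continuousAt).continuousWithinAt
      · intro v hv
        rw [interior_Icc] at hv
        exact (((hf v hv.1.le).add ((hasDerivAt_id v).const_mul K)).differentiableAt
          ).differentiableWithinAt
      · intro v hv
        rw [interior_Icc] at hv
        have hder : HasDerivAt (fun v => f v + K * v) (F v + K * 1) v :=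
          (hf v hv.1.le).add ((hasDerivAt_id v).const_mul K)
        rw [hder.deriv]
        have := hd v hv.1.le (hex v ⟨hv.1.le, hv.2.le⟩).le
        linarith
    have := hanti ⟨le_refl a, ht⟩ ⟨ht, le_refl t⟩ ht
    simp only at this
    linarith

/-- First order contraction lemma, Lemma `fo_contraction`. -/
theorem stmt3 {n l : ℕ} (m : ℕ) (hm : 1 ≤ m) (D : Matrix (Fin n) (Fin l) ℝ)
    (hsmin : 0 < sMin D) (t0 Ω0 dbar : ℝ) (hΩ0 : 0 < Ω0) (hdbar : 0 < dbar) :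
    ∀ δbar > 0, ∀ ω0, 0 < ω0 → ω0 < Ω0 →
      ∃ lam0 > 0, ∀ Λ : Fin l → ℝ, (∀ e, lam0 ≤ Λ e) →
        ∀ d : ℝ → Fin l → ℝ, ContinuousOn d (Set.Ici t0) →
          (∀ t ≥ t0, vecNorm (d t) ≤ dbar) →
          ∀ σ0 : ℝ → Fin l → ℝ,
            (∀ t ≥ t0, HasDerivAt σ0
              (d t - fun e => Λ e *
                spow ((m : ℝ) / ((m : ℝ) + 1)) (((Dᵀ * D).mulVec (σ0 t)) e)) t) →
            vecNorm (D.mulVec (σ0 t0)) ≤ Ω0 →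
            ∀ t ≥ t0 + δbar, vecNorm (D.mulVec (σ0 t)) ≤ ω0 := by
  intro δbar hδ ω0 hω0 hωΩ
  set α : ℝ := (m : ℝ) / ((m : ℝ) + 1) with hαdef
  have hmpos : (0 : ℝ) < (m : ℝ) := by exact_mod_cast Nat.pos_of_ne_zero (by omega)
  have hα0 : 0 < α := div_pos hmpos (by linarith)
  have hα1 : α < 1 := by
    rw [hαdef, div_lt_one (by linarith)]; linarith
  set r : ℝ := sMin D * ω0 with hrdef
  have hr : 0 < r := mul_pos hsmin hω0
  set K : ℝ := (Ω0 ^ 2 - ω0 ^ 2) / δbar with hKdef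
  have hK : 0 < K := div_pos (by nlinarith) hδ
  have hrα : 0 < r ^ α := Real.rpow_pos_of_pos hr α
  set lam0 : ℝ := (dbar + K / (2 * r)) / r ^ α with hlamdef
  have hlam0 : 0 < lam0 := div_pos (by positivity) hrα
  refine ⟨lam0, hlam0, ?_⟩
  intro Λ hΛ d hdcont hdb σ0 hσ hinit t htfin
  set y : ℝ → Fin l → ℝ := fun u => (Dᵀ * D).mulVec (σ0 u) with hydef
  set w : ℝ → Fin l → ℝ := fun u e => d u e - Λ e * spow α (y u e) with hwdef
  set V : ℝ → ℝ := fun u => ∑ i, (D.mulVec (σ0 u)) i ^ 2 with hVdef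
  set F : ℝ → ℝ := fun u => 2 * ∑ j, y u j * w u j with hFdef
  have hVderiv : ∀ u ≥ t0, HasDerivAt V (F u) u := by
    intro u hu
    have hcoord : ∀ j, HasDerivAt (fun v => σ0 v j) (w u j) u := by
      intro j
      have h := (hasDerivAt_pi.mp (hσ u hu)) j
      simpa [hwdef, Pi.sub_apply] using h
    have hx : ∀ i, HasDerivAt (fun v => (D.mulVec (σ0 v)) i) ((D.mulVec (w u)) i) u := by
      intro i
      have h : HasDerivAt (fun v => ∑ j, D i j * σ0 v j) (∑ j, D i j * w u j) u :=
        HasDerivAt.fun_sum fun j _ => (hcoord j).const_mul (D i j)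
      simpa [Matrix.mulVec, dotProduct] using h
    have hVsum : HasDerivAt V
        (∑ i, (2 : ℕ) * (D.mulVec (σ0 u)) i ^ 1 * (D.mulVec (w u)) i) u :=
      HasDerivAt.fun_sum fun i _ => (hx i).pow 2
    convert hVsum using 1
    rw [hFdef]
    simp only
    rw [sum_transpose_mul D (σ0 u) (w u), Finset.mul_sum]
    apply Finset.sum_congr rfl
    intro i _
    push_cast
    ring
  have hbound : ∀ u ≥ t0, ω0 ^ 2 ≤ V u → F u ≤ -K := by
    intro u hu hVu
    have hVeq : vecNorm (D.mulVec (σ0 u)) ^ 2 = V u := vecNorm_sq _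
    have hxt : ω0 ≤ vecNorm (D.mulVec (σ0 u)) := by
      nlinarith [vecNorm_nonneg (D.mulVec (σ0 u))]
    have hny : r ≤ vecNorm (y u) := by
      calc r = sMin D * ω0 := hrdef
        _ ≤ sMin D * vecNorm (D.mulVec (σ0 u)) := by
            exact mul_le_mul_of_nonneg_left hxt hsmin.le
        _ ≤ vecNorm ((Dᵀ * D).mulVec (σ0 u)) := smin_DtD D hsmin (σ0 u)
    set ny := vecNorm (y u) with hnydef
    have hnypos : 0 < ny := lt_of_lt_of_le hr hny
    have hsplit : ∑ j, y u j * w u j =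
        (∑ j, y u j * d u j) - ∑ j, Λ j * |y u j| ^ (α + 1) := by
      rw [← Finset.sum_sub_distrib]
      apply Finset.sum_congr rfl
      intro j _
      rw [hwdef]
      simp only
      have hs := spow_mul_self hα0.le (y u j)
      linear_combination (-(Λ j)) * hs
    have h1 : ∑ j, y u j * d u j ≤ ny * dbar := by
      calc ∑ j, y u j * d u j ≤ vecNorm (y u) * vecNorm (d u) := vec_cauchy _ _
        _ ≤ ny * dbar := mul_le_mul_of_nonneg_left (hdb u hu) (vecNorm_nonneg _)
    have h2 : lam0 * ny ^ (α + 1) ≤ ∑ j, Λ j * |y u j| ^ (α + 1) := by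
      calc lam0 * ny ^ (α + 1) ≤ lam0 * ∑ j, |y u j| ^ (α + 1) := by
            exact mul_le_mul_of_nonneg_left
              (vecNorm_rpow_le_sum (by linarith) (by linarith) (y u)) hlam0.le
        _ = ∑ j, lam0 * |y u j| ^ (α + 1) := Finset.mul_sum _ _ _
        _ ≤ ∑ j, Λ j * |y u j| ^ (α + 1) := by
            exact Finset.sum_le_sum fun j _ =>
              mul_le_mul_of_nonneg_right (hΛ j) (Real.rpow_nonneg (abs_nonneg _) _)
    have h3 : ny ^ (α + 1) = ny ^ α * ny := by
      rw [Real.rpow_add_one (ne_of_gt hnypos)]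
    have h4 : r ^ α ≤ ny ^ α := Real.rpow_le_rpow hr.le hny hα0.le
    have h5 : lam0 * r ^ α = dbar + K / (2 * r) := by
      rw [hlamdef]; field_simp
    have hFle : F u ≤ 2 * (ny * dbar - lam0 * (ny ^ α * ny)) := by
      rw [hFdef]
      simp only
      rw [hsplit, ← h3]
      linarith [h1, h2]
    have h7 : ny * (dbar + K / (2 * r)) ≤ lam0 * (ny ^ α * ny) := by
      rw [← h5]
      calc ny * (lam0 * r ^ α) = ny * lam0 * r ^ α := by ring
        _ ≤ ny * lam0 * ny ^ α :=
            mul_le_mul_of_nonneg_left h4 (mul_nonneg hnypos.le hlam0.le)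
        _ = lam0 * (ny ^ α * ny) := by ring
    have heq : 2 * (ny * dbar - ny * (dbar + K / (2 * r))) = -(K * ny / r) := by
      have hrne : r ≠ 0 := ne_of_gt hr
      field_simp
      ring
    have h8 : F u ≤ -(K * ny / r) := by linarith [hFle, h7, heq.le, heq.ge]
    have h9 : K ≤ K * ny / r := by
      rw [le_div_iff₀ hr]
      exact mul_le_mul_of_nonneg_left hny hK.le
    linarith
  have ht0 : t0 ≤ t := by linarith
  have hmax := descent hK.le hVderiv hbound t ht0
  have hinit2 : V t0 ≤ Ω0 ^ 2 := by
    have hVeq : vecNorm (D.mulVec (σ0 t0)) ^ 2 = V t0 := vecNorm_sq _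
    nlinarith [vecNorm_nonneg (D.mulVec (σ0 t0))]
  have hKt : Ω0 ^ 2 - ω0 ^ 2 ≤ K * (t - t0) := by
    have : Ω0 ^ 2 - ω0 ^ 2 = K * δbar := by rw [hKdef]; field_simp
    rw [this]
    exact mul_le_mul_of_nonneg_left (by linarith) hK.le
  have hVt : V t ≤ ω0 ^ 2 := by
    rcases max_cases (ω0 ^ 2) (V t0 - K * (t - t0)) with ⟨hmeq, _⟩ | ⟨hmeq, _⟩ <;>
      rw [hmeq] at hmax <;> linarith
  have hVeq : vecNorm (D.mulVec (σ0 t)) ^ 2 = V t := vecNorm_sq _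
  nlinarith [vecNorm_nonneg (D.mulVec (σ0 t))]
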